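/- Let (C*, F) and (D*, G) be filtered cochain complexes of abelian groups, and let φ : C* → D* and ψ : D* → C* be filtration-preserving chain maps (φ(F_q) ⊆ G_q, ψ(G_q) ⊆ F_q) each inducing an isomorphism on cohomology, with H^0(C) ≅ ℤ ≅ H^0(D). Then for every q, the induced filtration submodules correspond: under the isomorphism H^0(C) ≅ H^0(D) induced by φ, the image of H^0(C)_q equals H^0(D)_q, and hence the associated graded groups H^0(C)^{(q)} and H^0(D)^{(q)} are isomorphic for all q. -/

import Mathlib

section

variable (C : ℤ → Type) [∀ i, AddCommGroup (C i)]
variable (d : ∀ i : ℤ, C i →+ C (i + 1))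

/-- The cocycles in degree `i+1`: the kernel of `d_{i+1}`. -/
def cocycles (i : ℤ) : AddSubgroup (C (i + 1)) := (d (i + 1)).ker

/-- The coboundaries in degree `i+1`, viewed as a subgroup of the cocycles. -/
def coboundaries (i : ℤ) : AddSubgroup (cocycles C d i) :=
  (d i).range.addSubgroupOf (cocycles C d i)

/-- The cohomology of `C` in degree `i+1`. -/
abbrev cohomology (i : ℤ) := cocycles C d i ⧸ coboundaries C d i

/-- The induced filtration `H(C)_q = im(H(F_q) → H(C))` on cohomology. -/
def inducedFiltration (F : ℤ → ∀ i, AddSubgroup (C i)) (q i : ℤ) :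
    AddSubgroup (cohomology C d i) :=
  AddSubgroup.map (QuotientAddGroup.mk' (coboundaries C d i))
    ((F q (i + 1)).addSubgroupOf (cocycles C d i))

/-- The associated graded cohomology group `H(C)^{(q)} = H(C)_q / H(C)_{q+2}`. -/
abbrev gradedCohomology (F : ℤ → ∀ i, AddSubgroup (C i)) (q i : ℤ) :=
  inducedFiltration C d F q i ⧸
    (inducedFiltration C d F (q + 2) i).addSubgroupOf (inducedFiltration C d F q i)

end

/-- A chain map restricted to a map of cocycle groups in degree `i+1`. -/
def mapOnCocycles (C D : ℤ → Type) [∀ i, AddCommGroup (C i)] [∀ i, AddCommGroup (D i)]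
    (dC : ∀ i : ℤ, C i →+ C (i + 1)) (dD : ∀ i : ℤ, D i →+ D (i + 1))
    (φ : ∀ i : ℤ, C i →+ D i)
    (hφd : ∀ (i : ℤ) (c : C i), φ (i + 1) (dC i c) = dD i (φ i c)) (i : ℤ) :
    cocycles C dC i →+ cocycles D dD i :=
  AddMonoidHom.codRestrict ((φ (i + 1)).comp (cocycles C dC i).subtype) _
    (fun z => by
      have h2 : dC (i + 1) ((cocycles C dC i).subtype z) = 0 :=
        AddMonoidHom.mem_ker.mp z.2
      show ((φ (i + 1)).comp (cocycles C dC i).subtype) z ∈ (dD (i + 1)).ker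
      rw [AddMonoidHom.mem_ker, AddMonoidHom.comp_apply, ← hφd (i + 1), h2, map_zero])

/-!
The composite `ψ ∘ φ` on `H(C) ≅ ℤ` is a surjective endomorphism of `ℤ`, hence `±1`. So it is
injective, which makes `φ` an isomorphism on cohomology, and it fixes every subgroup. Given
`x ∈ H(D)_q`, write `x = φ y`; then `±y = ψ x ∈ H(C)_q`, so `H(D)_q = φ(H(C)_q)`. An isomorphism
matching two filtrations induces isomorphisms of their graded pieces.
-/

open Function

theorem AddMonoidHom.eq_id_or_eq_neg_id_of_surjective_int {f : ℤ →+ ℤ} (hf : Surjective f) :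
    f = AddMonoidHom.id ℤ ∨ f = -AddMonoidHom.id ℤ := by
  obtain ⟨m, hm⟩ := hf 1
  rw [AddMonoidHom.apply_int, smul_eq_mul] at hm
  rcases Int.eq_one_or_neg_one_of_mul_eq_one' hm with ⟨-, h⟩ | ⟨-, h⟩
  · exact .inl (AddMonoidHom.ext_int (by simpa using h))
  · exact .inr (AddMonoidHom.ext_int (by simpa using h))

section

variable {A B : Type*} [AddCommGroup A] [AddCommGroup B]

theorem AddMonoidHom.eq_id_or_eq_neg_id_of_surjective (e : A ≃+ ℤ) {f : A →+ A}
    (hf : Surjective f) : f = AddMonoidHom.id A ∨ f = -AddMonoidHom.id A := by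
  set g : ℤ →+ ℤ := (e : A →+ ℤ).comp (f.comp e.symm)
  have hfg : f = (e.symm : ℤ →+ A).comp (g.comp e) := by ext x; simp [g]
  have hg : Surjective g := e.surjective.comp (hf.comp e.symm.surjective)
  rcases eq_id_or_eq_neg_id_of_surjective_int hg with h | h
  · exact .inl (by rw [hfg, h]; ext x; simp)
  · exact .inr (by rw [hfg, h]; ext x; simp)

theorem AddSubgroup.comap_eq_self_of_eq_id_or_eq_neg_id {f : A →+ A}
    (hf : f = AddMonoidHom.id A ∨ f = -AddMonoidHom.id A) (S : AddSubgroup A) :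
    S.comap f = S := by
  rcases hf with rfl | rfl
  · exact S.comap_id
  · ext x; simp

variable {Φ : A →+ B} {Ψ : B →+ A}

theorem AddMonoidHom.injective_of_comp_eq_id_or_eq_neg_id
    (h : Ψ.comp Φ = AddMonoidHom.id A ∨ Ψ.comp Φ = -AddMonoidHom.id A) : Injective Φ := by
  refine Injective.of_comp (f := Ψ) fun x y hxy => ?_
  rcases h with h | h <;>
    simpa using (DFunLike.congr_fun h.symm x).trans (hxy.trans (DFunLike.congr_fun h y))

theorem AddSubgroup.map_eq_of_comp_eq_id_or_eq_neg_id
    (h : Ψ.comp Φ = AddMonoidHom.id A ∨ Ψ.comp Φ = -AddMonoidHom.id A) (hΦ : Surjective Φ)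
    {S : AddSubgroup A} {T : AddSubgroup B} (hST : S.map Φ ≤ T) (hTS : T.map Ψ ≤ S) :
    S.map Φ = T := by
  refine le_antisymm hST fun x hx => ?_
  obtain ⟨y, rfl⟩ := hΦ x
  have hy : y ∈ S.comap (Ψ.comp Φ) := hTS ⟨Φ y, hx, rfl⟩
  rw [comap_eq_self_of_eq_id_or_eq_neg_id h] at hy
  exact ⟨y, hy, rfl⟩

theorem AddSubgroup.nonempty_quotient_addEquiv_of_bijective (hΦ : Bijective Φ)
    {S₁ S₂ : AddSubgroup A} {T₁ T₂ : AddSubgroup B} (h₁ : S₁.map Φ = T₁) (h₂ : S₂.map Φ = T₂) :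
    Nonempty ((S₁ ⧸ S₂.addSubgroupOf S₁) ≃+ (T₁ ⧸ T₂.addSubgroupOf T₁)) := by
  set e := AddEquiv.ofBijective Φ hΦ
  have he : (e : A →+ B) = Φ := rfl
  subst h₁ h₂
  rw [← he]
  refine ⟨QuotientAddGroup.congr _ _ (e.addSubgroupMap S₁) ?_⟩
  ext ⟨y, hy⟩
  simp [map_equiv_eq_comap_symm, mem_addSubgroupOf]

end

section Cohomology

variable {C D : ℤ → Type} [∀ i, AddCommGroup (C i)] [∀ i, AddCommGroup (D i)]
  {dC : ∀ i : ℤ, C i →+ C (i + 1)} {dD : ∀ i : ℤ, D i →+ D (i + 1)} {φ : ∀ i : ℤ, C i →+ D i}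
  (hφd : ∀ (i : ℤ) (c : C i), φ (i + 1) (dC i c) = dD i (φ i c)) (i : ℤ)

theorem coboundaries_le_comap_mapOnCocycles :
    coboundaries C dC i ≤ (coboundaries D dD i).comap (mapOnCocycles C D dC dD φ hφd i) := by
  rintro z ⟨c, hc⟩
  exact ⟨φ i c, by rw [← hφd, hc]; rfl⟩

def cohomologyMap : cohomology C dC i →+ cohomology D dD i :=
  QuotientAddGroup.map _ _ _ (coboundaries_le_comap_mapOnCocycles hφd i)

theorem cohomologyMap_comp_mk' :
    (cohomologyMap hφd i).comp (QuotientAddGroup.mk' (coboundaries C dC i)) =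
      (QuotientAddGroup.mk' (coboundaries D dD i)).comp (mapOnCocycles C D dC dD φ hφd i) :=
  rfl

theorem cohomologyMap_surjective
    (h : ∀ w : cocycles D dD i, ∃ z : cocycles C dC i,
      QuotientAddGroup.mk' (coboundaries D dD i) (mapOnCocycles C D dC dD φ hφd i z) =
        QuotientAddGroup.mk' (coboundaries D dD i) w) :
    Surjective (cohomologyMap hφd i) := by
  intro x
  induction x using QuotientAddGroup.induction_on with
  | H w =>
    obtain ⟨z, hz⟩ := h w
    exact ⟨QuotientAddGroup.mk' _ z, hz⟩

theorem map_mk'_map_mapOnCocycles (S : AddSubgroup (cocycles C dC i)) :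
    (S.map (mapOnCocycles C D dC dD φ hφd i)).map (QuotientAddGroup.mk' (coboundaries D dD i)) =
      (S.map (QuotientAddGroup.mk' (coboundaries C dC i))).map (cohomologyMap hφd i) := by
  rw [AddSubgroup.map_map, AddSubgroup.map_map, cohomologyMap_comp_mk']

theorem map_inducedFiltration_le {F : ℤ → ∀ i, AddSubgroup (C i)}
    {G : ℤ → ∀ i, AddSubgroup (D i)} (hφF : ∀ q i, ∀ c ∈ F q i, φ i c ∈ G q i) (q : ℤ) :
    (inducedFiltration C dC F q i).map (cohomologyMap hφd i) ≤ inducedFiltration D dD G q i := by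
  rintro _ ⟨_, ⟨z, hz, rfl⟩, rfl⟩
  exact ⟨mapOnCocycles C D dC dD φ hφd i z, hφF q (i + 1) z hz, rfl⟩

end Cohomology

theorem stmt_14_general (C D : ℤ → Type) [∀ i, AddCommGroup (C i)] [∀ i, AddCommGroup (D i)]
    (dC : ∀ i : ℤ, C i →+ C (i + 1)) (dD : ∀ i : ℤ, D i →+ D (i + 1))
    (F : ℤ → ∀ i, AddSubgroup (C i)) (G : ℤ → ∀ i, AddSubgroup (D i))
    (φ : ∀ i : ℤ, C i →+ D i) (ψ : ∀ i : ℤ, D i →+ C i)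
    (hφd : ∀ (i : ℤ) (c : C i), φ (i + 1) (dC i c) = dD i (φ i c))
    (hψd : ∀ (i : ℤ) (c : D i), ψ (i + 1) (dD i c) = dC i (ψ i c))
    (hφF : ∀ q i, ∀ c ∈ F q i, φ i c ∈ G q i)
    (hψG : ∀ q i, ∀ c ∈ G q i, ψ i c ∈ F q i)
    (i : ℤ)
    -- φ and ψ induce isomorphisms on cohomology in degree i+1:
    (hφsurj : ∀ w : cocycles D dD i, ∃ z : cocycles C dC i,
      QuotientAddGroup.mk' (coboundaries D dD i)
        (mapOnCocycles C D dC dD φ hφd i z) =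
      QuotientAddGroup.mk' (coboundaries D dD i) w)
    (hψsurj : ∀ z : cocycles C dC i, ∃ w : cocycles D dD i,
      QuotientAddGroup.mk' (coboundaries C dC i)
        (mapOnCocycles D C dD dC ψ hψd i w) =
      QuotientAddGroup.mk' (coboundaries C dC i) z)
    -- H⁰(C) ≅ ℤ ≅ H⁰(D):
    (hHC : Nonempty (cohomology C dC i ≃+ ℤ)) :
    ∀ q : ℤ,
      AddSubgroup.map (QuotientAddGroup.mk' (coboundaries D dD i))
        (AddSubgroup.map (mapOnCocycles C D dC dD φ hφd i)
          ((F q (i + 1)).addSubgroupOf (cocycles C dC i))) =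
        inducedFiltration D dD G q i ∧
      Nonempty (gradedCohomology C dC F q i ≃+ gradedCohomology D dD G q i) := by
  set Φ := cohomologyMap hφd i
  set Ψ := cohomologyMap hψd i
  have hΦ : Surjective Φ := cohomologyMap_surjective hφd i hφsurj
  have hΨΦ := (Ψ.comp Φ).eq_id_or_eq_neg_id_of_surjective hHC.some
    ((cohomologyMap_surjective hψd i hψsurj).comp hΦ)
  have hfilt (q : ℤ) : (inducedFiltration C dC F q i).map Φ = inducedFiltration D dD G q i :=
    AddSubgroup.map_eq_of_comp_eq_id_or_eq_neg_id hΨΦ hΦ (map_inducedFiltration_le hφd i hφF q)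
      (map_inducedFiltration_le hψd i hψG q)
  intro q
  refine ⟨by rw [map_mk'_map_mapOnCocycles]; exact hfilt q, ?_⟩
  exact AddSubgroup.nonempty_quotient_addEquiv_of_bijective
    ⟨AddMonoidHom.injective_of_comp_eq_id_or_eq_neg_id hΨΦ, hΦ⟩ (hfilt q) (hfilt (q + 2))

/-- Let `(C*, F)` and `(D*, G)` be filtered cochain complexes of abelian groups,
`φ : C* → D*` and `ψ : D* → C*` filtration-preserving chain maps inducing
isomorphisms on cohomology, and suppose `H⁰(C) ≅ ℤ ≅ H⁰(D)` (here the relevant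
degree is written `i+1`).  Then under the isomorphism induced by `φ` the
filtration submodules correspond: the image of `H⁰(C)_q` equals `H⁰(D)_q`, and
hence the associated graded groups `H⁰(C)^{(q)}` and `H⁰(D)^{(q)}` are
isomorphic for all `q`. -/
theorem stmt_14 (C D : ℤ → Type) [∀ i, AddCommGroup (C i)] [∀ i, AddCommGroup (D i)]
    (dC : ∀ i : ℤ, C i →+ C (i + 1)) (dD : ∀ i : ℤ, D i →+ D (i + 1))
    (hddC : ∀ (i : ℤ) (c : C i), dC (i + 1) (dC i c) = 0)
    (hddD : ∀ (i : ℤ) (c : D i), dD (i + 1) (dD i c) = 0)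
    (F : ℤ → ∀ i, AddSubgroup (C i)) (G : ℤ → ∀ i, AddSubgroup (D i))
    (hFdesc : ∀ q i, F (q + 2) i ≤ F q i) (hGdesc : ∀ q i, G (q + 2) i ≤ G q i)
    (hFsub : ∀ q i, ∀ c ∈ F q i, dC i c ∈ F q (i + 1))
    (hGsub : ∀ q i, ∀ c ∈ G q i, dD i c ∈ G q (i + 1))
    (φ : ∀ i : ℤ, C i →+ D i) (ψ : ∀ i : ℤ, D i →+ C i)
    (hφd : ∀ (i : ℤ) (c : C i), φ (i + 1) (dC i c) = dD i (φ i c))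
    (hψd : ∀ (i : ℤ) (c : D i), ψ (i + 1) (dD i c) = dC i (ψ i c))
    (hφF : ∀ q i, ∀ c ∈ F q i, φ i c ∈ G q i)
    (hψG : ∀ q i, ∀ c ∈ G q i, ψ i c ∈ F q i)
    (i : ℤ)
    -- φ and ψ induce isomorphisms on cohomology in degree i+1:
    (hφsurj : ∀ w : cocycles D dD i, ∃ z : cocycles C dC i,
      QuotientAddGroup.mk' (coboundaries D dD i)
        (mapOnCocycles C D dC dD φ hφd i z) =
      QuotientAddGroup.mk' (coboundaries D dD i) w)
    (hφinj : ∀ z : cocycles C dC i,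
      QuotientAddGroup.mk' (coboundaries D dD i)
        (mapOnCocycles C D dC dD φ hφd i z) = 0 →
      QuotientAddGroup.mk' (coboundaries C dC i) z = 0)
    (hψsurj : ∀ z : cocycles C dC i, ∃ w : cocycles D dD i,
      QuotientAddGroup.mk' (coboundaries C dC i)
        (mapOnCocycles D C dD dC ψ hψd i w) =
      QuotientAddGroup.mk' (coboundaries C dC i) z)
    (hψinj : ∀ w : cocycles D dD i,
      QuotientAddGroup.mk' (coboundaries C dC i)
        (mapOnCocycles D C dD dC ψ hψd i w) = 0 →
      QuotientAddGroup.mk' (coboundaries D dD i) w = 0)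
    -- H⁰(C) ≅ ℤ ≅ H⁰(D):
    (hHC : Nonempty (cohomology C dC i ≃+ ℤ))
    (hHD : Nonempty (cohomology D dD i ≃+ ℤ)) :
    ∀ q : ℤ,
      AddSubgroup.map (QuotientAddGroup.mk' (coboundaries D dD i))
        (AddSubgroup.map (mapOnCocycles C D dC dD φ hφd i)
          ((F q (i + 1)).addSubgroupOf (cocycles C dC i))) =
        inducedFiltration D dD G q i ∧
      Nonempty (gradedCohomology C dC F q i ≃+ gradedCohomology D dD G q i) :=
  stmt_14_general C D dC dD F G φ ψ hφd hψd hφF hψG i hφsurj hψsurj hHC
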